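/- Let φ ∈ C²(E) and for x ∈ (ℝ^d)^n define φₙ(x) := φ(∑ᵢ x_i 1_{A_i^n}). Then for σ : ℝ^d × P₂(ℝ^d) → ℝ^{d×d′} and the lifted operator Σ(X)e′_m(ω) = σ(X(ω), X_# L¹)e′_m, one has the identity Tr( Aₙ(x, μ_x) D²φₙ(x) ) = ∑_{m=1}^{d′} ⟨ D²φ(X_n^x) Σ(X_n^x) e′_m, Σ(X_n^x) e′_m ⟩_E, where Aₙ(x, μ_x) is the nd×nd block matrix with blocks (Aₙ)_{ij} = σ(x_i, μ_x) σ^⊤(x_j, μ_x). -/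

import Mathlib

open MeasureTheory
open scoped ENNReal

/-- Lebesgue measure on Ω = (0,1). -/
noncomputable def μΩ : Measure ℝ := volume.restrict (Set.Ioo (0:ℝ) 1)

/-- The empirical measure `(1/n) ∑ᵢ δ_{x_i}` of a vector of `n` points. -/
noncomputable def empiricalMeasure {d n : ℕ} (x : Fin n → EuclideanSpace ℝ (Fin d)) :
    Measure (EuclideanSpace ℝ (Fin d)) :=
  (n : ℝ≥0∞)⁻¹ • ∑ i, Measure.dirac (x i)

/-- The subinterval `A_i^n = ((i-1)/n, i/n)` of `(0,1)`. -/
def Ain (n : ℕ) (i : Fin n) : Set ℝ := Set.Ioo ((i : ℝ) / n) (((i : ℝ) + 1) / n)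

/-- The step function `∑ᵢ x_i 1_{A_i^n}`. -/
noncomputable def stepFun {d : ℕ} (n : ℕ) (x : Fin n → EuclideanSpace ℝ (Fin d)) :
    ℝ → EuclideanSpace ℝ (Fin d) :=
  fun ω => ∑ i, (Ain n i).indicator (fun _ => x i) ω

instance : IsFiniteMeasure μΩ := by
  constructor
  simp [μΩ, Measure.restrict_apply, Real.volume_Ioo]

lemma stepFun_memℒp {d : ℕ} (n : ℕ) (x : Fin n → EuclideanSpace ℝ (Fin d)) :
    MemLp (stepFun n x) 2 μΩ := by
  have h : ∀ i : Fin n, MemLp (fun ω => (Ain n i).indicator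
      (fun _ => x i) ω) 2 μΩ := fun i =>
    memLp_indicator_const 2 measurableSet_Ioo (x i)
      (Or.inr ((measure_lt_top μΩ _).trans_le le_top).ne)
  have := memLp_finset_sum' (μ := μΩ) (p := 2) Finset.univ (fun i _ => h i)
  simp only [Finset.sum_fn] at this
  exact this

/-- The element of `E = L²((0,1);ℝ^d)` represented by the step function. -/
noncomputable def stepLp {d : ℕ} (n : ℕ) (x : Fin n → EuclideanSpace ℝ (Fin d)) :
    Lp (EuclideanSpace ℝ (Fin d)) 2 μΩ :=
  (stepFun_memℒp n x).toLp (stepFun n x)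

lemma stepFun_add {d : ℕ} (n : ℕ) (x y : Fin n → EuclideanSpace ℝ (Fin d)) :
    stepFun n (x + y) = stepFun n x + stepFun n y := by
  funext ω
  simp only [stepFun, Pi.add_apply]
  rw [← Finset.sum_add_distrib]
  refine Finset.sum_congr rfl fun i _ => ?_
  by_cases h : ω ∈ Ain n i <;> simp [Set.indicator, h]

lemma stepFun_smul {d : ℕ} (n : ℕ) (c : ℝ) (x : Fin n → EuclideanSpace ℝ (Fin d)) :
    stepFun n (c • x) = c • stepFun n x := by
  funext ω
  simp only [stepFun, Pi.smul_apply]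
  rw [Finset.smul_sum]
  refine Finset.sum_congr rfl fun i _ => ?_
  by_cases h : ω ∈ Ain n i <;> simp [Set.indicator, h]

/-- The step map as a linear map. -/
noncomputable def stepLpₗ (d n : ℕ) :
    (Fin n → EuclideanSpace ℝ (Fin d)) →ₗ[ℝ] Lp (EuclideanSpace ℝ (Fin d)) 2 μΩ where
  toFun x := stepLp n x
  map_add' x y := by
    unfold stepLp
    rw [← MemLp.toLp_add (stepFun_memℒp n x) (stepFun_memℒp n y)]
    exact MemLp.toLp_congr _ _ (Filter.EventuallyEq.of_eq (stepFun_add n x y))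
  map_smul' c x := by
    unfold stepLp
    simp only [RingHom.id_apply]
    rw [← MemLp.toLp_const_smul c (stepFun_memℒp n x)]
    exact MemLp.toLp_congr _ _ (Filter.EventuallyEq.of_eq (stepFun_smul n c x))

set_option maxHeartbeats 1000000 in
/-- For `φ ∈ C²(E)` and `φₙ(x) := φ(∑ᵢ x_i 1_{A_i^n})`, and for
`σ : ℝ^d × P₂(ℝ^d) → ℝ^{d×d'}` with lifted operator `Σ(X)e'_m(ω) = σ(X(ω),X_#L¹)e'_m`,
one has `Tr(Aₙ(x,μ_x) D²φₙ(x)) = ∑ₘ ⟨D²φ(X_n^x) Σ(X_n^x)e'_m, Σ(X_n^x)e'_m⟩_E`,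
where `Aₙ(x,μ_x)` is the block matrix with blocks `σ(x_i,μ_x)σᵀ(x_j,μ_x)`; both sides
are written as sums of second-order directional derivatives. -/
theorem trace_identity
    (d d' n : ℕ)
    (σ : EuclideanSpace ℝ (Fin d) → Measure (EuclideanSpace ℝ (Fin d)) →
      (EuclideanSpace ℝ (Fin d') →L[ℝ] EuclideanSpace ℝ (Fin d)))
    (φ : Lp (EuclideanSpace ℝ (Fin d)) 2 μΩ → ℝ) (hφ : ContDiff ℝ 2 φ)
    (φₙ : (Fin n → EuclideanSpace ℝ (Fin d)) → ℝ)
    (hφₙ : ∀ x, φₙ x = φ (stepLp n x))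
    (x : Fin n → EuclideanSpace ℝ (Fin d)) :
    (∑ m : Fin d', ∑ i : Fin n, ∑ j : Fin n,
        fderiv ℝ (fderiv ℝ φₙ) x
          (Pi.single j (σ (x j) (empiricalMeasure x) (EuclideanSpace.single m 1)))
          (Pi.single i (σ (x i) (empiricalMeasure x) (EuclideanSpace.single m 1)))) =
      ∑ m : Fin d',
        fderiv ℝ (fderiv ℝ φ) (stepLp n x)
          (stepLp n (fun i => σ (x i) (empiricalMeasure x) (EuclideanSpace.single m 1)))
          (stepLp n (fun i => σ (x i) (empiricalMeasure x) (EuclideanSpace.single m 1))) := by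
  classical
  set T : (Fin n → EuclideanSpace ℝ (Fin d)) →L[ℝ] Lp (EuclideanSpace ℝ (Fin d)) 2 μΩ :=
    (stepLpₗ d n).toContinuousLinearMap with hTdef
  have hT : ∀ y, stepLp n y = T y := fun y => rfl
  have hφₙ' : φₙ = φ ∘ ⇑T := by funext y; simp [hφₙ, hT]
  have hg : ContDiff ℝ 1 (fderiv ℝ φ) := hφ.fderiv_right (by norm_num)
  have hgd : Differentiable ℝ (fderiv ℝ φ) := hg.differentiable one_ne_zero
  have hφd : Differentiable ℝ φ := hφ.differentiable two_ne_zero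
  have h1 : fderiv ℝ φₙ = fun y => (fderiv ℝ φ (T y)).comp T := by
    funext y
    rw [hφₙ', fderiv_comp y (hφd _) T.differentiableAt, T.fderiv]
  set L : (Lp (EuclideanSpace ℝ (Fin d)) 2 μΩ →L[ℝ] ℝ) →L[ℝ]
      ((Fin n → EuclideanSpace ℝ (Fin d)) →L[ℝ] ℝ) :=
    (ContinuousLinearMap.compL ℝ (Fin n → EuclideanSpace ℝ (Fin d))
      (Lp (EuclideanSpace ℝ (Fin d)) 2 μΩ) ℝ).flip T with hLdef
  have h2 : ∀ u v, fderiv ℝ (fderiv ℝ φₙ) x u v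
      = fderiv ℝ (fderiv ℝ φ) (T x) (T u) (T v) := by
    intro u v
    rw [h1]
    have hcomp : (fun y => (fderiv ℝ φ (T y)).comp T) = ⇑L ∘ (fderiv ℝ φ) ∘ ⇑T := rfl
    have hd1 : DifferentiableAt ℝ (fderiv ℝ φ ∘ ⇑T) x :=
      (hgd (T x)).comp x T.differentiableAt
    rw [hcomp, fderiv_comp x L.differentiableAt hd1, L.fderiv,
      fderiv_comp x (hgd (T x)) T.differentiableAt, T.fderiv]
    rfl
  refine Finset.sum_congr rfl fun m _ => ?_
  set a : Fin n → EuclideanSpace ℝ (Fin d) :=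
    fun i => σ (x i) (empiricalMeasure x) (EuclideanSpace.single m 1) with ha
  set B := fderiv ℝ (fderiv ℝ φ) (T x) with hB
  have hsum : ∑ k : Fin n, T (Pi.single k (a k)) = T a := by
    rw [← map_sum]
    congr 1
    exact Finset.univ_sum_single a
  calc ∑ i : Fin n, ∑ j : Fin n,
        fderiv ℝ (fderiv ℝ φₙ) x (Pi.single j (a j)) (Pi.single i (a i))
      = ∑ i : Fin n, ∑ j : Fin n,
        B (T (Pi.single j (a j))) (T (Pi.single i (a i))) := by
        exact Finset.sum_congr rfl fun i _ => Finset.sum_congr rfl fun j _ => h2 _ _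
    _ = ∑ i : Fin n, B (T a) (T (Pi.single i (a i))) := by
        refine Finset.sum_congr rfl fun i _ => ?_
        rw [← hsum, map_sum, ContinuousLinearMap.sum_apply]
    _ = B (T a) (T a) := by
        conv_lhs => rw [← map_sum (B (T a)) (fun i => T (Pi.single i (a i))) Finset.univ]
        rw [hsum]
    _ = fderiv ℝ (fderiv ℝ φ) (stepLp n x) (stepLp n a) (stepLp n a) := by
        rw [hT x, hT a]
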